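/- If ζ^μ and ξ^μ are smooth vector fields on ℝ^D with D⁺_μ ζ_ν = 0 and D⁻_μ ξ_ν = 0 for all μ,ν, then for all μ: ∂_μ(ζ^ν G_{νρ} ξ^ρ) = −H_{μνρ} ζ^ν ξ^ρ. -/

import Mathlib

/-! Compatibility of `D^±` with the metric, with torsion `H`, gives the Leibniz rule
`∂_μ(ζ^νG_{νρ}ξ^ρ) = (D⁺_μζ_ρ)ξ^ρ + ζ^ν(D⁻_μξ_ν) − H_{μνρ}ζ^νξ^ρ`: the connection terms
combine through `Γ⁺_{μν,ρ} + Γ⁻_{μρ,ν} = ∂_μG_{νρ} + H_{μνρ}`. For covariantly constant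
`ζ` and `ξ` only the torsion term survives. -/

noncomputable section

/-- Partial derivative of `f` at `x` in the `μ`-th coordinate direction. -/
def pd {D : ℕ} (μ : Fin D) (f : (Fin D → ℝ) → ℝ) (x : Fin D → ℝ) : ℝ :=
  fderiv ℝ f x (Pi.single μ 1)

/-- A smooth real-valued function. -/
def Sm {D : ℕ} (f : (Fin D → ℝ) → ℝ) : Prop := ContDiff ℝ (⊤ : ℕ∞) f

/-- A smooth vector field on `ℝ^D`. -/
def SmoothVF {D : ℕ} (V : (Fin D → ℝ) → Fin D → ℝ) : Prop := ∀ μ, Sm fun x => V x μ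

/-- A smooth field of 2-tensors on `ℝ^D`. -/
def Smooth2T {D : ℕ} (T : (Fin D → ℝ) → Fin D → Fin D → ℝ) : Prop :=
  ∀ μ ν, Sm fun x => T x μ ν

/-- The connection coefficients `Γ_{μν,ρ} = ½(∂_μG_{νρ} + ∂_νG_{μρ} − ∂_ρG_{μν})`. -/
def Gam {D : ℕ} (G : (Fin D → ℝ) → Fin D → Fin D → ℝ) (μ ν ρ : Fin D) (x : Fin D → ℝ) : ℝ :=
  (pd μ (fun y => G y ν ρ) x + pd ν (fun y => G y μ ρ) x - pd ρ (fun y => G y μ ν) x) / 2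

/-- The torsion `H_{μνρ} = ∂_μB_{νρ} + ∂_νB_{ρμ} + ∂_ρB_{μν}`. -/
def Htor {D : ℕ} (B : (Fin D → ℝ) → Fin D → Fin D → ℝ) (μ ν ρ : Fin D) (x : Fin D → ℝ) : ℝ :=
  pd μ (fun y => B y ν ρ) x + pd ν (fun y => B y ρ μ) x + pd ρ (fun y => B y μ ν) x

/-- `Γ⁺_{μν,ρ} = Γ_{μν,ρ} + ½H_{μνρ}`. -/
def GamP {D : ℕ} (G B : (Fin D → ℝ) → Fin D → Fin D → ℝ) (μ ν ρ : Fin D) (x : Fin D → ℝ) : ℝ :=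
  Gam G μ ν ρ x + Htor B μ ν ρ x / 2

/-- `Γ⁻_{μν,ρ} = Γ_{μν,ρ} − ½H_{μνρ}`. -/
def GamM {D : ℕ} (G B : (Fin D → ℝ) → Fin D → Fin D → ℝ) (μ ν ρ : Fin D) (x : Fin D → ℝ) : ℝ :=
  Gam G μ ν ρ x - Htor B μ ν ρ x / 2

/-- The lowered components `V_μ = G_{μν}V^ν` of a vector field. -/
def lowerV {D : ℕ} (G : (Fin D → ℝ) → Fin D → Fin D → ℝ)
    (V : (Fin D → ℝ) → Fin D → ℝ) (μ : Fin D) (x : Fin D → ℝ) : ℝ :=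
  ∑ ν, G x μ ν * V x ν

/-- The covariant derivative `D⁺_μV_ν = G_{νρ}∂_μV^ρ + Γ⁺_{μρ,ν}V^ρ`. -/
def Dp {D : ℕ} (G B : (Fin D → ℝ) → Fin D → Fin D → ℝ)
    (V : (Fin D → ℝ) → Fin D → ℝ) (μ ν : Fin D) (x : Fin D → ℝ) : ℝ :=
  (∑ ρ, G x ν ρ * pd μ (fun y => V y ρ) x) + ∑ ρ, GamP G B μ ρ ν x * V x ρ

/-- The covariant derivative `D⁻_μV_ν = G_{νρ}∂_μV^ρ + Γ⁻_{μρ,ν}V^ρ`. -/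
def Dm {D : ℕ} (G B : (Fin D → ℝ) → Fin D → Fin D → ℝ)
    (V : (Fin D → ℝ) → Fin D → ℝ) (μ ν : Fin D) (x : Fin D → ℝ) : ℝ :=
  (∑ ρ, G x ν ρ * pd μ (fun y => V y ρ) x) + ∑ ρ, GamM G B μ ρ ν x * V x ρ

/-- The Lie derivative of the metric:
`(ℒ_ζG)_{μν} = ζ^ρ∂_ρG_{μν} + ∂_μζ^ρ·G_{ρν} + ∂_νζ^ρ·G_{μρ}`. -/
def lieG {D : ℕ} (G : (Fin D → ℝ) → Fin D → Fin D → ℝ)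
    (ζ : (Fin D → ℝ) → Fin D → ℝ) (μ ν : Fin D) (x : Fin D → ℝ) : ℝ :=
  (∑ ρ, ζ x ρ * pd ρ (fun y => G y μ ν) x)
    + (∑ ρ, pd μ (fun y => ζ y ρ) x * G x ρ ν)
    + ∑ ρ, pd ν (fun y => ζ y ρ) x * G x μ ρ

/-- A Killing pair `(ζ, b)`: `D⁻_μζ_ν + D⁺_νζ_μ + ∂_μb_ν − ∂_νb_μ = 0`. -/
def IsKillingPair {D : ℕ} (G B : (Fin D → ℝ) → Fin D → Fin D → ℝ)
    (ζ b : (Fin D → ℝ) → Fin D → ℝ) : Prop :=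
  ∀ (μ ν : Fin D) (x : Fin D → ℝ),
    Dm G B ζ μ ν x + Dp G B ζ ν μ x
      + pd μ (fun y => b y ν) x - pd ν (fun y => b y μ) x = 0

section PairingDerivative

variable {D : ℕ}

theorem Sm.differentiableAt {f : (Fin D → ℝ) → ℝ} (hf : Sm f) (x : Fin D → ℝ) :
    DifferentiableAt ℝ f x :=
  (hf.differentiable (by simp)).differentiableAt

section PartialDerivative

variable (μ : Fin D) (x : Fin D → ℝ)

theorem pd_fun_sum {ι : Type*} (s : Finset ι) {f : ι → (Fin D → ℝ) → ℝ}
    (hf : ∀ i ∈ s, DifferentiableAt ℝ (f i) x) :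
    pd μ (fun y => ∑ i ∈ s, f i y) x = ∑ i ∈ s, pd μ (f i) x := by
  simp [pd, fderiv_fun_sum hf]

theorem pd_fun_mul {f g : (Fin D → ℝ) → ℝ} (hf : DifferentiableAt ℝ f x)
    (hg : DifferentiableAt ℝ g x) :
    pd μ (fun y => f y * g y) x = pd μ f x * g x + f x * pd μ g x := by
  simp only [pd, fderiv_fun_mul hf hg, add_apply, smul_apply, smul_eq_mul]
  ring

theorem pd_fun_neg (f : (Fin D → ℝ) → ℝ) : pd μ (fun y => -f y) x = -pd μ f x := by
  simp [pd, fderiv_fun_neg]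

end PartialDerivative

section Connection

variable {G B : (Fin D → ℝ) → Fin D → Fin D → ℝ} (μ ν ρ : Fin D) (x : Fin D → ℝ)

theorem gam_add_gam_swap (hGsym : ∀ x μ ν, G x μ ν = G x ν μ) :
    Gam G μ ν ρ x + Gam G μ ρ ν x = pd μ (fun y => G y ν ρ) x := by
  have hsym : pd μ (fun y => G y ρ ν) x = pd μ (fun y => G y ν ρ) x := by
    simp_rw [hGsym _ ρ ν]
  simp only [Gam, hsym]
  ring

theorem htor_swap (hBanti : ∀ x μ ν, B x μ ν = -B x ν μ) :
    Htor B μ ρ ν x = -Htor B μ ν ρ x := by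
  have hanti : ∀ σ α β, pd σ (fun y => B y α β) x = -pd σ (fun y => B y β α) x :=
    fun σ α β => by simp_rw [hBanti _ α β, pd_fun_neg]
  simp only [Htor, hanti μ ρ ν, hanti ρ μ ν, hanti ν ρ μ]
  ring

theorem gamP_add_gamM_swap (hGsym : ∀ x μ ν, G x μ ν = G x ν μ)
    (hBanti : ∀ x μ ν, B x μ ν = -B x ν μ) :
    GamP G B μ ν ρ x + GamM G B μ ρ ν x = pd μ (fun y => G y ν ρ) x + Htor B μ ν ρ x := by
  rw [GamP, GamM, htor_swap μ ν ρ x hBanti, ← gam_add_gam_swap μ ν ρ x hGsym]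
  ring

end Connection

theorem pd_metric_pairing {G B : (Fin D → ℝ) → Fin D → Fin D → ℝ} {ζ ξ : (Fin D → ℝ) → Fin D → ℝ}
    (hGsym : ∀ x μ ν, G x μ ν = G x ν μ) (hBanti : ∀ x μ ν, B x μ ν = -B x ν μ)
    (μ : Fin D) (x : Fin D → ℝ)
    (hG : ∀ ν ρ, DifferentiableAt ℝ (fun y => G y ν ρ) x)
    (hζ : ∀ ν, DifferentiableAt ℝ (fun y => ζ y ν) x)
    (hξ : ∀ ρ, DifferentiableAt ℝ (fun y => ξ y ρ) x) :
    pd μ (fun y => ∑ ν, ∑ ρ, ζ y ν * G y ν ρ * ξ y ρ) x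
      = ∑ ρ, Dp G B ζ μ ρ x * ξ x ρ + ∑ ν, ζ x ν * Dm G B ξ μ ν x
        - ∑ ν, ∑ ρ, Htor B μ ν ρ x * ζ x ν * ξ x ρ := by
  have hterm : ∀ ν ρ, DifferentiableAt ℝ (fun y => ζ y ν * G y ν ρ) x :=
    fun ν ρ => (hζ ν).fun_mul (hG ν ρ)
  have product_rule : pd μ (fun y => ∑ ν, ∑ ρ, ζ y ν * G y ν ρ * ξ y ρ) x
      = ∑ ν, ∑ ρ, ((pd μ (fun y => ζ y ν) x * G x ν ρ
          + ζ x ν * pd μ (fun y => G y ν ρ) x) * ξ x ρ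
          + ζ x ν * G x ν ρ * pd μ (fun y => ξ y ρ) x) := by
    rw [pd_fun_sum μ x _ fun ν _ =>
      DifferentiableAt.fun_sum fun ρ _ => (hterm ν ρ).fun_mul (hξ ρ)]
    refine Finset.sum_congr rfl fun ν _ => ?_
    rw [pd_fun_sum μ x _ fun ρ _ => (hterm ν ρ).fun_mul (hξ ρ)]
    refine Finset.sum_congr rfl fun ρ _ => ?_
    rw [pd_fun_mul μ x (hterm ν ρ) (hξ ρ), pd_fun_mul μ x (hζ ν) (hG ν ρ)]
  rw [product_rule]
  simp only [Dp, Dm, add_mul, mul_add, Finset.sum_mul, Finset.mul_sum, Finset.sum_add_distrib]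
  rw [Finset.sum_comm (f := fun ρ ν => G x ρ ν * pd μ (fun y => ζ y ν) x * ξ x ρ),
    Finset.sum_comm (f := fun ρ ν => GamP G B μ ν ρ x * ζ x ν * ξ x ρ)]
  simp only [← Finset.sum_add_distrib, ← Finset.sum_sub_distrib]
  refine Finset.sum_congr rfl fun ν _ => Finset.sum_congr rfl fun ρ _ => ?_
  rw [hGsym x ρ ν]
  linear_combination -(ζ x ν * ξ x ρ) * gamP_add_gamM_swap μ ν ρ x hGsym hBanti

end PairingDerivative

theorem stmt10_general {D : ℕ}
    (G B : (Fin D → ℝ) → Fin D → Fin D → ℝ)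
    (hGs : Smooth2T G) (hGsym : ∀ x μ ν, G x μ ν = G x ν μ)
    (hBanti : ∀ x μ ν, B x μ ν = -B x ν μ)
    (ζ ξ : (Fin D → ℝ) → Fin D → ℝ) (hζ : SmoothVF ζ) (hξ : SmoothVF ξ)
    (h1 : ∀ μ ν x, Dp G B ζ μ ν x = 0) (h2 : ∀ μ ν x, Dm G B ξ μ ν x = 0) :
    ∀ μ x, pd μ (fun y => ∑ ν, ∑ ρ, ζ y ν * G y ν ρ * ξ y ρ) x
      = -∑ ν, ∑ ρ, Htor B μ ν ρ x * ζ x ν * ξ x ρ := by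
  intro μ x
  rw [pd_metric_pairing hGsym hBanti μ x (fun ν ρ => (hGs ν ρ).differentiableAt x)
    (fun ν => (hζ ν).differentiableAt x) (fun ρ => (hξ ρ).differentiableAt x)]
  simp [h1, h2]

/-- For covariantly constant vector fields of opposite chirality,
`∂_μ(ζ^νG_{νρ}ξ^ρ) = −H_{μνρ}ζ^νξ^ρ`. -/
theorem stmt10 {D : ℕ} (hD : 1 ≤ D)
    (G B : (Fin D → ℝ) → Fin D → Fin D → ℝ)
    (hGs : Smooth2T G) (hGsym : ∀ x μ ν, G x μ ν = G x ν μ)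
    (hBs : Smooth2T B) (hBanti : ∀ x μ ν, B x μ ν = -B x ν μ)
    (ζ ξ : (Fin D → ℝ) → Fin D → ℝ) (hζ : SmoothVF ζ) (hξ : SmoothVF ξ)
    (h1 : ∀ μ ν x, Dp G B ζ μ ν x = 0) (h2 : ∀ μ ν x, Dm G B ξ μ ν x = 0) :
    ∀ μ x, pd μ (fun y => ∑ ν, ∑ ρ, ζ y ν * G y ν ρ * ξ y ρ) x
      = -∑ ν, ∑ ρ, Htor B μ ν ρ x * ζ x ν * ξ x ρ :=
  stmt10_general G B hGs hGsym hBanti ζ ξ hζ hξ h1 h2
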